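/- arXiv:0804.2694 — 9 statements merged into one kernel-verified Lean document; each statement's English description precedes it below -/
import Mathlib

section
/- The space of resolvable loads on a framework is contained in the space of equilibrium loads: if a stress resolves a load F, then the sum over all vertices i of the force pairs (p_i, f_i), interpreted as bivectors p_i ∧ f_i in Λ²ℝ^{d+1} (embedding E^d as the affine hyperplane x⁰=1), is zero. -/
/-!
Homogenize the joints as `q i = (1, p i)`. Resolving the load says `(0, f i) = ∑ j, ω i j • (q i - q j)`,
so `∑ i, q i ∧ f i = -∑ i, ∑ j, ω i j • (q i ∧ q j)`, and this double sum vanishes because `ω` is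
symmetric while `∧` is alternating.
-/

open ExteriorAlgebra

theorem Fintype.sum_sum_eq_zero_of_antisymm {V A : Type*} [Fintype V] [AddCommMonoid A]
    (f : V → V → A) (hanti : ∀ i j, f i j + f j i = 0) (hdiag : ∀ i, f i i = 0) :
    ∑ i, ∑ j, f i j = 0 := by
  rw [← Finset.sum_product']
  refine Finset.sum_ninvolution Prod.swap (fun p => hanti p.1 p.2) (fun p hp hfix => hp ?_)
    (fun _ => Finset.mem_univ _) Prod.swap_swap
  have hdiagonal : p.2 = p.1 := congrArg Prod.fst hfix
  rw [hdiagonal, hdiag]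

namespace ExteriorAlgebra

variable {R M V : Type*} [CommRing R] [AddCommGroup M] [Module R M] [Fintype V]

theorem ι_mul_ι_sum_smul_sub (x : M) (c : V → R) (y : V → M) :
    ι R x * ι R (∑ j, c j • (x - y j)) = -∑ j, c j • (ι R x * ι R (y j)) := by
  simp only [map_sum, map_smul, map_sub, Finset.mul_sum, mul_smul_comm, mul_sub, ι_sq_zero,
    zero_sub, smul_neg, Finset.sum_neg_distrib]

theorem sum_sum_smul_ι_mul_ι_eq_zero (q : V → M) (ω : V → V → R) (hsym : ∀ i j, ω i j = ω j i) :
    ∑ i, ∑ j, ω i j • (ι R (q i) * ι R (q j)) = 0 :=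
  Fintype.sum_sum_eq_zero_of_antisymm _
    (fun i j => by rw [hsym j i, ← smul_add, ι_add_mul_swap, smul_zero])
    (fun i => by rw [ι_sq_zero, smul_zero])

theorem sum_ι_mul_ι_sum_smul_sub_eq_zero (q : V → M) (ω : V → V → R)
    (hsym : ∀ i j, ω i j = ω j i) :
    ∑ i, ι R (q i) * ι R (∑ j, ω i j • (q i - q j)) = 0 := by
  simp only [ι_mul_ι_sum_smul_sub, Finset.sum_neg_distrib,
    sum_sum_smul_ι_mul_ι_eq_zero q ω hsym, neg_zero]

end ExteriorAlgebra

theorem Fin.cons_zero_sum_smul_sub {R V : Type*} [Ring R] [Fintype V] {d : ℕ} (a : R)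
    (c : V → R) (x : Fin d → R) (y : V → Fin d → R) :
    (Fin.cons 0 (∑ j, c j • (x - y j)) : Fin (d + 1) → R) =
      ∑ j, c j • ((Fin.cons a x : Fin (d + 1) → R) - Fin.cons a (y j)) := by
  ext k
  refine Fin.cases ?_ (fun m => ?_) k <;> simp [Finset.sum_apply]

theorem resolvable_load_is_equilibrium_general {V : Type*} [Fintype V] {d : ℕ}
    (P : V → Fin d → ℝ)
    (ω : V → V → ℝ) (hsym : ∀ i j, ω i j = ω j i)
    (F : V → Fin d → ℝ)
    (hres : ∀ i, F i + ∑ j, ω i j • (P j - P i) = 0) :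
    ∑ i, (ι ℝ (Fin.cons 1 (P i) : Fin (d+1) → ℝ)) *
         (ι ℝ (Fin.cons 0 (F i) : Fin (d+1) → ℝ)) = 0 := by
  have hF : ∀ i, F i = ∑ j, ω i j • (P i - P j) := fun i => by
    rw [eq_neg_of_add_eq_zero_left (hres i), ← Finset.sum_neg_distrib]
    simp only [← smul_neg, neg_sub]
  simp only [hF, Fin.cons_zero_sum_smul_sub (1 : ℝ)]
  exact sum_ι_mul_ι_sum_smul_sub_eq_zero _ ω hsym

/-- a resolvable load is an equilibrium load: its total bivector
`∑ i, p_i ∧ f_i` in `Λ²ℝ^{d+1}` vanishes. -/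
theorem resolvable_load_is_equilibrium {V : Type*} [Fintype V] {d : ℕ}
    (Edge : V → V → Prop)
    (P : V → Fin d → ℝ) (hP : ∀ i j, Edge i j → P i ≠ P j)
    (ω : V → V → ℝ) (hsym : ∀ i j, ω i j = ω j i)
    (hsupp : ∀ i j, ω i j ≠ 0 → Edge i j)
    (F : V → Fin d → ℝ)
    (hres : ∀ i, F i + ∑ j, ω i j • (P j - P i) = 0) :
    ∑ i, (ι ℝ (Fin.cons 1 (P i) : Fin (d+1) → ℝ)) *
         (ι ℝ (Fin.cons 0 (F i) : Fin (d+1) → ℝ)) = 0 :=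
  resolvable_load_is_equilibrium_general P ω hsym F hres
end

section
/- Second principle of virtual work: a velocity field Q on a framework whose vertices affinely span E^d annihilates every equilibrium load if and only if Q is the restriction of an infinitesimal isometry of E^d, i.e. there exist a skew-symmetric matrix A and a vector b with q_i = A p_i + b for all i. -/
open Matrix

open scoped RealInnerProductSpace

/-! The pairing of a trivial motion `pᵢ ↦ A pᵢ + b` with a load `F` is
`∑ₖₗ A k l M k l + b ⬝ᵥ ∑ᵢ fᵢ` with `M = ∑ᵢ fᵢ pᵢᵀ`, and the torque condition says exactly that `M`
is symmetric; so trivial motions annihilate equilibrium loads. Conversely, pairing with the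
translations and with the elementary rotations `E_lk - E_kl` recovers the two equilibrium
conditions. Thus the equilibrium loads are the orthogonal complement of the trivial motions, and a
field annihilating them lies in the double complement, which in finite dimension is the space of
trivial motions itself. -/

theorem Submodule.mem_iff_forall_sum_dotProduct_eq_zero {ι κ : Type*} [Fintype ι] [Fintype κ]
    (W : Submodule ℝ (ι → κ → ℝ)) (Q : ι → κ → ℝ) :
    Q ∈ W ↔ ∀ F : ι → κ → ℝ, (∀ R ∈ W, ∑ i, R i ⬝ᵥ F i = 0) → ∑ i, Q i ⬝ᵥ F i = 0 := by
  let e : (ι → κ → ℝ) ≃ₗ[ℝ] EuclideanSpace ℝ (ι × κ) :=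
    (LinearEquiv.curry ℝ ℝ ι κ).symm ≪≫ₗ (WithLp.linearEquiv 2 ℝ _).symm
  let W' := W.map (e : (ι → κ → ℝ) →ₗ[ℝ] EuclideanSpace ℝ (ι × κ))
  have inner_e (R F : ι → κ → ℝ) : ⟪e R, e F⟫ = ∑ i, R i ⬝ᵥ F i := by
    simp [e, PiLp.inner_apply, Fintype.sum_prod_type, dotProduct, mul_comm]
  have mem_orthogonal (F : ι → κ → ℝ) : e F ∈ W'ᗮ ↔ ∀ R ∈ W, ∑ i, R i ⬝ᵥ F i = 0 :=
    ⟨fun h R hR => inner_e R F ▸ h _ ⟨R, hR, rfl⟩,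
      by rintro h _ ⟨R, hR, rfl⟩; exact (inner_e R F).trans (h R hR)⟩
  calc Q ∈ W ↔ e Q ∈ W'ᗮᗮ := by
        rw [W'.orthogonal_orthogonal, Submodule.mem_map_equiv, e.symm_apply_apply]
    _ ↔ ∀ F, e F ∈ W'ᗮ → ⟪e F, e Q⟫ = 0 := e.surjective.forall
    _ ↔ _ := by simp only [mem_orthogonal, inner_e, dotProduct_comm (Q _)]

theorem Matrix.sum_mul_eq_zero_of_transpose_eq_neg_of_isSymm {n : Type*} [Fintype n]
    {A M : Matrix n n ℝ} (hA : Aᵀ = -A) (hM : M.IsSymm) : ∑ k, ∑ l, A k l * M k l = 0 := by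
  have hA' (k l : n) : A l k = -A k l := congrFun (congrFun hA k) l
  have hswap : ∑ k, ∑ l, A k l * M k l = ∑ k, ∑ l, A l k * M l k := Finset.sum_comm
  have hneg : ∑ k, ∑ l, A l k * M l k = -∑ k, ∑ l, A k l * M k l := by
    simp only [← Finset.sum_neg_distrib]
    exact Finset.sum_congr rfl fun k _ => Finset.sum_congr rfl fun l _ => by
      rw [hA', hM.apply, neg_mul]
  linarith

theorem Matrix.sum_mulVec_dotProduct {V n : Type*} [Fintype V] [Fintype n]
    (A : Matrix n n ℝ) (P F : V → n → ℝ) :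
    ∑ i, A *ᵥ P i ⬝ᵥ F i = ∑ k, ∑ l, A k l * (∑ i, vecMulVec (F i) (P i)) k l := by
  simp only [dotProduct, mulVec, Matrix.sum_apply, vecMulVec_apply, Finset.sum_mul, Finset.mul_sum]
  rw [Finset.sum_comm]
  refine Finset.sum_congr rfl fun k _ => ?_
  rw [Finset.sum_comm]
  exact Finset.sum_congr rfl fun l _ => Finset.sum_congr rfl fun i _ => by ring

section Framework

variable {V n : Type*}

def IsEquilibriumLoad [Fintype V] (P F : V → n → ℝ) : Prop :=
  (∑ i, F i) = 0 ∧ ∀ k l, ∑ i, (P i k * F i l - F i k * P i l) = 0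

def trivialMotions [Fintype n] (P : V → n → ℝ) : Submodule ℝ (V → n → ℝ) where
  carrier := {Q | ∃ (A : Matrix n n ℝ) (b : n → ℝ), Aᵀ = -A ∧ ∀ i, Q i = A *ᵥ P i + b}
  add_mem' := by
    rintro Q R ⟨A, b, hA, hQ⟩ ⟨B, c, hB, hR⟩
    refine ⟨A + B, b + c, by rw [transpose_add, hA, hB, neg_add], fun i => ?_⟩
    simp only [Pi.add_apply, hQ, hR, add_mulVec]
    abel
  zero_mem' := ⟨0, 0, by simp, fun i => by simp⟩
  smul_mem' := by
    rintro t Q ⟨A, b, hA, hQ⟩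
    refine ⟨t • A, t • b, by rw [transpose_smul, hA, smul_neg], fun i => ?_⟩
    simp only [Pi.smul_apply, hQ, smul_mulVec, smul_add]

theorem IsEquilibriumLoad.isSymm_sum_vecMulVec [Fintype V] {P F : V → n → ℝ}
    (hF : IsEquilibriumLoad P F) : (∑ i, vecMulVec (F i) (P i)).IsSymm := by
  refine IsSymm.ext fun k l => ?_
  have h := hF.2 k l
  rw [Finset.sum_sub_distrib, sub_eq_zero] at h
  simp only [Matrix.sum_apply, vecMulVec_apply]
  rw [← h]
  exact Finset.sum_congr rfl fun i _ => mul_comm _ _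

theorem IsEquilibriumLoad.sum_dotProduct_eq_zero [Fintype V] [Fintype n] {P F Q : V → n → ℝ}
    (hF : IsEquilibriumLoad P F) (hQ : Q ∈ trivialMotions P) : ∑ i, Q i ⬝ᵥ F i = 0 := by
  obtain ⟨A, b, hA, hQ⟩ := hQ
  calc ∑ i, Q i ⬝ᵥ F i = ∑ i, A *ᵥ P i ⬝ᵥ F i + b ⬝ᵥ ∑ i, F i := by
        simp only [hQ, add_dotProduct, Finset.sum_add_distrib, dotProduct_sum]
    _ = 0 := by
      rw [sum_mulVec_dotProduct,
        sum_mul_eq_zero_of_transpose_eq_neg_of_isSymm hA hF.isSymm_sum_vecMulVec, hF.1,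
        dotProduct_zero, add_zero]

theorem isEquilibriumLoad_of_forall_sum_dotProduct_eq_zero [Fintype V] [Fintype n]
    {P F : V → n → ℝ} (h : ∀ Q ∈ trivialMotions P, ∑ i, Q i ⬝ᵥ F i = 0) :
    IsEquilibriumLoad P F := by
  classical
  constructor
  · ext k
    have htrans : (fun _ => Pi.single k 1 : V → n → ℝ) ∈ trivialMotions P :=
      ⟨0, Pi.single k 1, by simp, fun i => by simp⟩
    simpa [Finset.sum_apply, single_dotProduct] using h _ htrans
  · intro k l
    let A : Matrix n n ℝ := single l k 1 - single k l 1
    have hrot : (fun i => A *ᵥ P i) ∈ trivialMotions P :=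
      ⟨A, 0, by simp [A, transpose_sub], fun i => by simp⟩
    have hA (p f : n → ℝ) : A *ᵥ p ⬝ᵥ f = p k * f l - f k * p l := by
      simp [A, sub_mulVec, single_mulVec_eq, sub_dotProduct, single_dotProduct, mul_comm]
    simpa [hA] using h _ hrot

theorem isEquilibriumLoad_iff_forall_sum_dotProduct_eq_zero [Fintype V] [Fintype n]
    {P F : V → n → ℝ} :
    IsEquilibriumLoad P F ↔ ∀ Q ∈ trivialMotions P, ∑ i, Q i ⬝ᵥ F i = 0 :=
  ⟨fun hF _ hQ => hF.sum_dotProduct_eq_zero hQ, isEquilibriumLoad_of_forall_sum_dotProduct_eq_zero⟩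

end Framework

theorem annihilates_equilibrium_iff_trivial_general {V : Type*} [Fintype V] {d : ℕ}
    (P : V → Fin d → ℝ)
    (Q : V → Fin d → ℝ) :
    (∀ F : V → Fin d → ℝ,
      ((∑ i, F i) = 0 ∧ ∀ k l, (∑ i, (P i k * F i l - F i k * P i l)) = 0) →
      ∑ i, ∑ k, Q i k * F i k = 0) ↔
    ∃ (A : Matrix (Fin d) (Fin d) ℝ) (b : Fin d → ℝ),
      Aᵀ = -A ∧ ∀ i, Q i = A.mulVec (P i) + b := by
  calc _ ↔ ∀ F, IsEquilibriumLoad P F → ∑ i, Q i ⬝ᵥ F i = 0 := Iff.rfl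
    _ ↔ Q ∈ trivialMotions P := by
      simp only [isEquilibriumLoad_iff_forall_sum_dotProduct_eq_zero]
      exact ((trivialMotions P).mem_iff_forall_sum_dotProduct_eq_zero Q).symm
    _ ↔ _ := Iff.rfl

/-- second principle of virtual work: for a framework whose vertices
affinely span `E^d`, a velocity field annihilates every equilibrium load iff it is
the restriction of an infinitesimal isometry `x ↦ Ax + b` with `A` skew-symmetric. -/
theorem annihilates_equilibrium_iff_trivial {V : Type*} [Fintype V] {d : ℕ}
    (P : V → Fin d → ℝ)
    (hspan : affineSpan ℝ (Set.range P) = ⊤)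
    (Q : V → Fin d → ℝ) :
    (∀ F : V → Fin d → ℝ,
      ((∑ i, F i) = 0 ∧ ∀ k l, (∑ i, (P i k * F i l - F i k * P i l)) = 0) →
      ∑ i, ∑ k, Q i k * F i k = 0) ↔
    ∃ (A : Matrix (Fin d) (Fin d) ℝ) (b : Fin d → ℝ),
      Aᵀ = -A ∧ ∀ i, Q i = A.mulVec (P i) + b :=
  annihilates_equilibrium_iff_trivial_general P Q
end

section
/- For a framework in E^d whose vertices affinely span E^d, the space of equilibrium loads has dimension d·|V| − (d+1 choose 2). -/
open Matrix

/-- The linear map taking a load to its total force. -/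
noncomputable def totalForce (V : Type*) [Fintype V] (d : ℕ) :
    (V → Fin d → ℝ) →ₗ[ℝ] (Fin d → ℝ) :=
  ∑ i : V, LinearMap.proj i

/-- The torque (as a matrix `p f^T − f p^T`) of a force `f` applied at `p`, linear in `f`. -/
noncomputable def torqueAt {d : ℕ} (p : Fin d → ℝ) :
    (Fin d → ℝ) →ₗ[ℝ] Matrix (Fin d) (Fin d) ℝ where
  toFun f := fun k l => p k * f l - f k * p l
  map_add' x y := by
    funext k l
    show p k * (x + y) l - (x + y) k * p l = (p k * x l - x k * p l) + (p k * y l - y k * p l)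
    simp only [Pi.add_apply, Matrix.add_apply]
    ring
  map_smul' c x := by
    funext k l
    show p k * (c • x) l - (c • x) k * p l = c * (p k * x l - x k * p l)
    simp only [Pi.smul_apply, Matrix.smul_apply, smul_eq_mul, RingHom.id_apply]
    ring

/-- The subspace of equilibrium loads: total force and total torque vanish. -/
noncomputable def equilibriumLoads {V : Type*} [Fintype V] {d : ℕ} (P : V → Fin d → ℝ) :
    Submodule ℝ (V → Fin d → ℝ) :=
  LinearMap.ker ((totalForce V d).prod (∑ i : V, (torqueAt (P i)).comp (LinearMap.proj i)))

/-! The equilibrium loads are the kernel of `F ↦ (∑ fᵢ, ∑ torqueAt pᵢ fᵢ)`, a linear map into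
`ℝ^d × so(d)`. It is onto: the balanced pair `f` at `pᵢ`, `-f` at `pⱼ` has torque
`torqueAt (pᵢ - pⱼ) f`, and as the differences `pᵢ - pⱼ` span `ℝ^d` these torques span all skew
matrices; one more force at a single vertex then fixes the total force. Rank–nullity leaves
`d |V| - d - (d choose 2)` dimensions. -/

open Module

section SkewMatrices

variable {K n : Type*} [Field K] [StarRing K] [TrivialStar K]

lemma mem_skewAdjoint_matrix_iff {M : Matrix n n K} :
    M ∈ skewAdjoint.submodule K (Matrix n n K) ↔ ∀ k l, M l k = -M k l := by
  change M ∈ skewAdjoint _ ↔ _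
  rw [skewAdjoint.mem_iff, Matrix.star_eq_conjTranspose, ← Matrix.ext_iff]
  simp [Matrix.conjTranspose_apply]

def skewOfUpper [LinearOrder n] (y : {p : n × n // p.1 < p.2} → K) : Matrix n n K :=
  fun k l => if h : k < l then y ⟨(k, l), h⟩ else if h' : l < k then -y ⟨(l, k), h'⟩ else 0

lemma skewOfUpper_mem_skewAdjoint [LinearOrder n] (y : {p : n × n // p.1 < p.2} → K) :
    skewOfUpper y ∈ skewAdjoint.submodule K (Matrix n n K) := by
  refine mem_skewAdjoint_matrix_iff.2 fun k l => ?_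
  rcases lt_trichotomy k l with h | rfl | h
  · simp [skewOfUpper, h, h.not_gt]
  · simp [skewOfUpper]
  · simp [skewOfUpper, h, h.not_gt]

variable (K n) in
def skewAdjointMatrixEquivUpper [CharZero K] [LinearOrder n] :
    skewAdjoint.submodule K (Matrix n n K) ≃ₗ[K] ({p : n × n // p.1 < p.2} → K) where
  toFun M p := (M : Matrix n n K) p.1.1 p.1.2
  map_add' _ _ := rfl
  map_smul' _ _ := rfl
  invFun y := ⟨skewOfUpper y, skewOfUpper_mem_skewAdjoint y⟩
  left_inv := by
    rintro ⟨M, hM⟩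
    have hskew := mem_skewAdjoint_matrix_iff.1 hM
    ext k l
    rcases lt_trichotomy k l with h | rfl | h
    · simp [skewOfUpper, h]
    · simpa [skewOfUpper, eq_comm] using CharZero.eq_neg_self_iff.1 (hskew k k)
    · simp [skewOfUpper, h, h.not_gt, hskew l k]
  right_inv y := by
    funext ⟨⟨k, l⟩, h⟩
    simp [skewOfUpper, h]

lemma finrank_skewAdjoint_matrix [CharZero K] [Fintype n] [LinearOrder n] :
    finrank K (skewAdjoint.submodule K (Matrix n n K)) = (Fintype.card n).choose 2 := by
  rw [(skewAdjointMatrixEquivUpper K n).finrank_eq, finrank_fintype_fun_eq_card,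
    Fintype.card_subtype, Fintype.card_product_filter_lt]

end SkewMatrices

section Equilibrium

variable {V : Type*} [Fintype V] {d : ℕ}

noncomputable def totalTorque (P : V → Fin d → ℝ) :
    (V → Fin d → ℝ) →ₗ[ℝ] Matrix (Fin d) (Fin d) ℝ :=
  ∑ i : V, (torqueAt (P i)).comp (LinearMap.proj i)

lemma torqueAt_apply (p f : Fin d → ℝ) (k l : Fin d) :
    torqueAt p f k l = p k * f l - f k * p l := rfl

lemma torqueAt_swap (p f : Fin d → ℝ) : torqueAt f p = -torqueAt p f := by
  ext k l
  simp only [torqueAt_apply, Matrix.neg_apply]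
  ring

lemma torqueAt_mem_skewAdjoint (p f : Fin d → ℝ) :
    torqueAt p f ∈ skewAdjoint.submodule ℝ (Matrix (Fin d) (Fin d) ℝ) :=
  mem_skewAdjoint_matrix_iff.2 fun k l => by simp only [torqueAt_apply]; ring

lemma span_range_torqueAt :
    Submodule.span ℝ (Set.range fun pf : (Fin d → ℝ) × (Fin d → ℝ) => torqueAt pf.1 pf.2) =
      skewAdjoint.submodule ℝ (Matrix (Fin d) (Fin d) ℝ) := by
  refine le_antisymm (Submodule.span_le.2 ?_) fun M hM => ?_
  · rintro _ ⟨⟨p, f⟩, rfl⟩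
    exact torqueAt_mem_skewAdjoint p f
  · have hskew := mem_skewAdjoint_matrix_iff.1 hM
    have hM : M = ∑ k, ∑ l, (M k l / 2) • torqueAt (Pi.single k 1) (Pi.single l 1) := by
      ext a b
      simp only [Matrix.sum_apply, Matrix.smul_apply, torqueAt_apply, Pi.single_apply, mul_ite,
        mul_one, mul_zero, smul_eq_mul, mul_sub, Finset.sum_sub_distrib, Finset.sum_ite_eq,
        Finset.mem_univ, ↓reduceIte, Finset.sum_ite_irrel, Finset.sum_const_zero, hskew a b]
      ring
    rw [hM]
    exact Submodule.sum_mem _ fun k _ => Submodule.sum_mem _ fun l _ =>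
      Submodule.smul_mem _ _ (Submodule.subset_span ⟨(_, _), rfl⟩)

lemma totalForce_single [DecidableEq V] (i : V) (f : Fin d → ℝ) :
    totalForce V d (Pi.single i f) = f := by
  simp [totalForce, LinearMap.sum_apply]

lemma totalTorque_single [DecidableEq V] (P : V → Fin d → ℝ) (i : V) (f : Fin d → ℝ) :
    totalTorque P (Pi.single i f) = torqueAt (P i) f := by
  rw [totalTorque, LinearMap.sum_apply, Fintype.sum_eq_single i fun j hj => by simp [hj]]
  simp

lemma totalTorque_mem_skewAdjoint (P F : V → Fin d → ℝ) :
    totalTorque P F ∈ skewAdjoint.submodule ℝ (Matrix (Fin d) (Fin d) ℝ) := by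
  rw [totalTorque, LinearMap.sum_apply]
  exact Submodule.sum_mem _ fun i _ => torqueAt_mem_skewAdjoint _ _

lemma torqueAt_mem_map_ker_totalForce {P : V → Fin d → ℝ}
    (hspan : affineSpan ℝ (Set.range P) = ⊤) (x f : Fin d → ℝ) :
    torqueAt x f ∈ (LinearMap.ker (totalForce V d)).map (totalTorque P) := by
  classical
  set Q := (LinearMap.ker (totalForce V d)).map (totalTorque P)
  -- `x ↦ torqueAt x f` is linear, so it suffices to treat `x = P i - P j`.
  have hdiff : vectorSpan ℝ (Set.range P) ≤ Q.comap (-torqueAt f) := by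
    rw [vectorSpan_def, Submodule.span_le]
    rintro _ ⟨-, ⟨i, rfl⟩, -, ⟨j, rfl⟩, rfl⟩
    refine ⟨Pi.single i f - Pi.single j f, ?_, ?_⟩
    · simp [totalForce_single]
    · simp only [map_sub, totalTorque_single, LinearMap.neg_apply, vsub_eq_sub]
      rw [torqueAt_swap (P i), torqueAt_swap (P j)]
      abel
  rw [AffineSubspace.vectorSpan_eq_top_of_affineSpan_eq_top ℝ _ _ hspan] at hdiff
  have hx := hdiff (Submodule.mem_top (x := x))
  rwa [Submodule.mem_comap, LinearMap.neg_apply, ← torqueAt_swap] at hx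

lemma map_ker_totalForce_eq_skewAdjoint {P : V → Fin d → ℝ}
    (hspan : affineSpan ℝ (Set.range P) = ⊤) :
    (LinearMap.ker (totalForce V d)).map (totalTorque P) =
      skewAdjoint.submodule ℝ (Matrix (Fin d) (Fin d) ℝ) := by
  refine le_antisymm ?_ ?_
  · rintro _ ⟨F, -, rfl⟩
    exact totalTorque_mem_skewAdjoint P F
  · rw [← span_range_torqueAt, Submodule.span_le]
    rintro _ ⟨⟨x, f⟩, rfl⟩
    exact torqueAt_mem_map_ker_totalForce hspan x f

noncomputable def forceTorqueMap (P : V → Fin d → ℝ) :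
    (V → Fin d → ℝ) →ₗ[ℝ] (Fin d → ℝ) × skewAdjoint.submodule ℝ (Matrix (Fin d) (Fin d) ℝ) :=
  (totalForce V d).prod ((totalTorque P).codRestrict _ (totalTorque_mem_skewAdjoint P))

lemma ker_forceTorqueMap (P : V → Fin d → ℝ) :
    LinearMap.ker (forceTorqueMap P) = equilibriumLoads P := by
  rw [forceTorqueMap, equilibriumLoads, LinearMap.ker_prod, LinearMap.ker_prod,
    LinearMap.ker_codRestrict]
  rfl

lemma forceTorqueMap_surjective {P : V → Fin d → ℝ} (hspan : affineSpan ℝ (Set.range P) = ⊤) :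
    Function.Surjective (forceTorqueMap P) := by
  classical
  obtain ⟨-, i, -⟩ := AffineSubspace.nonempty_of_affineSpan_eq_top ℝ _ _ hspan
  rintro ⟨g, M, hM⟩
  obtain ⟨F, hF, hFM⟩ :
      M - torqueAt (P i) g ∈ (LinearMap.ker (totalForce V d)).map (totalTorque P) := by
    rw [map_ker_totalForce_eq_skewAdjoint hspan]
    exact sub_mem hM (torqueAt_mem_skewAdjoint _ _)
  -- `F` balances the torque of the single force `g` at `P i` without changing the total force.
  refine ⟨Pi.single i g + F, Prod.ext ?_ (Subtype.ext ?_)⟩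
  · simp [forceTorqueMap, totalForce_single, LinearMap.mem_ker.1 hF]
  · simp [forceTorqueMap, totalTorque_single, hFM]

end Equilibrium

/-- for a framework whose vertices affinely span `E^d`, the space of
equilibrium loads has dimension `d·|V| − (d+1 choose 2)`. -/
theorem finrank_equilibriumLoads {V : Type*} [Fintype V] {d : ℕ} (P : V → Fin d → ℝ)
    (hspan : affineSpan ℝ (Set.range P) = ⊤) :
    Module.finrank ℝ (equilibriumLoads P) = d * Fintype.card V - (d + 1).choose 2 := by
  have h := (forceTorqueMap P).finrank_range_add_finrank_ker
  rw [LinearMap.range_eq_top.2 (forceTorqueMap_surjective hspan), finrank_top,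
    ker_forceTorqueMap, finrank_prod, finrank_fin_fun, finrank_skewAdjoint_matrix,
    Fintype.card_fin, finrank_pi_fintype] at h
  simp only [finrank_fin_fun, Finset.sum_const, Finset.card_univ, smul_eq_mul] at h
  have hchoose : (d + 1).choose 2 = d + d.choose 2 := by simp [Nat.choose_succ_succ]
  rw [hchoose, Nat.mul_comm]
  omega
end

section
/- Affine invariance of infinitesimal motions: let Φ(x) = Ax + b be an affine isomorphism of E^d (A invertible). A velocity field Q = (q_i) is an infinitesimal motion of the framework P if and only if the velocity field ((A^T)^{-1} q_i) is an infinitesimal motion of the framework Φ∘P; moreover Q is trivial iff its image is trivial. -/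
/-!
Under `x ↦ A x + b`, differences of positions transform by `A` and velocities by `(Aᵀ)⁻¹`,
and `⟪A u, (Aᵀ)⁻¹ v⟫ = ⟪u, v⟫`. A trivial motion with skew matrix `S` becomes one with the
congruent skew matrix `(Aᵀ)⁻¹ S A⁻¹`.
-/

open Matrix

namespace Framework

variable {V n R : Type*} [Fintype n] [CommRing R]

def IsInfinitesimalMotion (Edge : V → V → Prop) (P Q : V → n → R) : Prop :=
  ∀ i j, Edge i j → (P i - P j) ⬝ᵥ (Q i - Q j) = 0

def IsTrivialMotion (P Q : V → n → R) : Prop :=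
  ∃ (S : Matrix n n R) (c : n → R), Sᵀ = -S ∧ ∀ i, Q i = S *ᵥ P i + c

theorem isTrivialMotion_add_const_iff (P Q : V → n → R) (b : n → R) :
    IsTrivialMotion (fun i => P i + b) Q ↔ IsTrivialMotion P Q := by
  constructor
  · rintro ⟨S, c, hS, hQ⟩
    exact ⟨S, S *ᵥ b + c, hS, fun i => by rw [hQ i, mulVec_add, add_assoc]⟩
  · rintro ⟨S, c, hS, hQ⟩
    exact ⟨S, c - S *ᵥ b, hS, fun i => by rw [hQ i, mulVec_add]; abel⟩

variable [DecidableEq n]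

theorem mulVec_dotProduct_transpose_mulVec {A B : Matrix n n R} (hBA : B * A = 1)
    (u v : n → R) : (A *ᵥ u) ⬝ᵥ (Bᵀ *ᵥ v) = u ⬝ᵥ v := by
  rw [dotProduct_mulVec, vecMul_transpose, mulVec_mulVec, hBA, one_mulVec]

theorem isInfinitesimalMotion_affine_iff (Edge : V → V → Prop) {A B : Matrix n n R}
    (hBA : B * A = 1) (b : n → R) (P Q : V → n → R) :
    IsInfinitesimalMotion Edge (fun i => A *ᵥ P i + b) (fun i => Bᵀ *ᵥ Q i) ↔
      IsInfinitesimalMotion Edge P Q := by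
  simp only [IsInfinitesimalMotion, add_sub_add_right_eq_sub, ← mulVec_sub,
    mulVec_dotProduct_transpose_mulVec hBA]

theorem IsTrivialMotion.mulVec {A B : Matrix n n R} (hBA : B * A = 1) {P Q : V → n → R}
    (hPQ : IsTrivialMotion P Q) :
    IsTrivialMotion (fun i => A *ᵥ P i) (fun i => Bᵀ *ᵥ Q i) := by
  obtain ⟨S, c, hS, hQ⟩ := hPQ
  refine ⟨Bᵀ * S * B, Bᵀ *ᵥ c, ?_, fun i => ?_⟩
  · rw [transpose_mul, transpose_mul, hS, transpose_transpose, Matrix.neg_mul, Matrix.mul_neg,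
      Matrix.mul_assoc]
  · simp only [hQ i, mulVec_add, mulVec_mulVec, Matrix.mul_assoc, hBA, Matrix.mul_one]

theorem isTrivialMotion_mulVec_iff {A B : Matrix n n R} (hBA : B * A = 1) (hAB : A * B = 1)
    (P Q : V → n → R) :
    IsTrivialMotion (fun i => A *ᵥ P i) (fun i => Bᵀ *ᵥ Q i) ↔ IsTrivialMotion P Q := by
  refine ⟨fun h => ?_, IsTrivialMotion.mulVec hBA⟩
  simpa only [mulVec_mulVec, ← transpose_mul, hBA, transpose_one, one_mulVec] using h.mulVec hAB

theorem isTrivialMotion_affine_iff {A B : Matrix n n R} (hBA : B * A = 1) (hAB : A * B = 1)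
    (b : n → R) (P Q : V → n → R) :
    IsTrivialMotion (fun i => A *ᵥ P i + b) (fun i => Bᵀ *ᵥ Q i) ↔ IsTrivialMotion P Q :=
  (isTrivialMotion_add_const_iff _ _ b).trans (isTrivialMotion_mulVec_iff hBA hAB P Q)

end Framework

open Framework in
theorem affine_invariance_kinematic_general {V : Type*} {d : ℕ}
    (Edge : V → V → Prop)
    (P : V → Fin d → ℝ)
    (A : Matrix (Fin d) (Fin d) ℝ) (hA : IsUnit A.det) (b : Fin d → ℝ)
    (Q : V → Fin d → ℝ) :
    ((∀ i j, Edge i j → ∑ k, (P i k - P j k) * (Q i k - Q j k) = 0) ↔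
      (∀ i j, Edge i j →
        ∑ k, ((A.mulVec (P i) + b) k - (A.mulVec (P j) + b) k) *
             ((Aᵀ)⁻¹.mulVec (Q i) k - (Aᵀ)⁻¹.mulVec (Q j) k) = 0)) ∧
    ((∃ (S : Matrix (Fin d) (Fin d) ℝ) (c : Fin d → ℝ),
        Sᵀ = -S ∧ ∀ i, Q i = S.mulVec (P i) + c) ↔
      (∃ (S : Matrix (Fin d) (Fin d) ℝ) (c : Fin d → ℝ),
        Sᵀ = -S ∧ ∀ i, (Aᵀ)⁻¹.mulVec (Q i) = S.mulVec (A.mulVec (P i) + b) + c)) := by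
  rw [← transpose_nonsing_inv]
  have hBA := nonsing_inv_mul A hA
  have hAB := mul_nonsing_inv A hA
  exact ⟨(isInfinitesimalMotion_affine_iff Edge hBA b P Q).symm,
    (isTrivialMotion_affine_iff hBA hAB b P Q).symm⟩

/-- affine invariance of infinitesimal motions: for an affine
isomorphism `Φ(x) = Ax + b`, a velocity field `Q` is an infinitesimal motion of `P`
iff `((Aᵀ)⁻¹ q_i)` is an infinitesimal motion of `Φ∘P`; and `Q` is trivial iff its
image is trivial. -/
theorem affine_invariance_kinematic {V : Type*} [Fintype V] {d : ℕ}
    (Edge : V → V → Prop)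
    (P : V → Fin d → ℝ) (hP : ∀ i j, Edge i j → P i ≠ P j)
    (A : Matrix (Fin d) (Fin d) ℝ) (hA : IsUnit A.det) (b : Fin d → ℝ)
    (Q : V → Fin d → ℝ) :
    ((∀ i j, Edge i j → ∑ k, (P i k - P j k) * (Q i k - Q j k) = 0) ↔
      (∀ i j, Edge i j →
        ∑ k, ((A.mulVec (P i) + b) k - (A.mulVec (P j) + b) k) *
             ((Aᵀ)⁻¹.mulVec (Q i) k - (Aᵀ)⁻¹.mulVec (Q j) k) = 0)) ∧
    ((∃ (S : Matrix (Fin d) (Fin d) ℝ) (c : Fin d → ℝ),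
        Sᵀ = -S ∧ ∀ i, Q i = S.mulVec (P i) + c) ↔
      (∃ (S : Matrix (Fin d) (Fin d) ℝ) (c : Fin d → ℝ),
        Sᵀ = -S ∧ ∀ i, (Aᵀ)⁻¹.mulVec (Q i) = S.mulVec (A.mulVec (P i) + b) + c)) :=
  affine_invariance_kinematic_general Edge P A hA b Q
end

section
/- Projective invariance of static rigidity: let M ∈ GL(ℝ^{d+1}) induce a projective map Φ that maps no vertex of the framework P ⊂ E^d to infinity. Then the induced map M_*: Λ²ℝ^{d+1} → Λ²ℝ^{d+1} carries equilibrium loads on P (written as bivector loads g_i = p_i ∧ f_i) bijectively to equilibrium loads on Φ∘P, and resolvable loads to resolvable loads. Consequently P is statically rigid iff Φ∘P is statically rigid. -/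
/-!
A projective map acts on bivectors through the algebra map `M_*`, which sends `x ∧ y` to
`Mx ∧ My`; being an invertible algebra map it transports forces at `x_i`, their sums and the
stresses `c_{ij} x_i ∧ x_j` of the framework `X` to those of `M ∘ X`, and back via `M⁻¹`.
Passing from `M x_i` to its affine representative only rescales each vertex by a nonzero
scalar `s_i`, and a stress coefficient `c_{ij}` is then absorbed as `c_{ij} / (s_i s_j)`.
Static rigidity, being a statement about these two classes of loads, is therefore invariant.
-/

set_option synthInstance.maxHeartbeats 400000

open ExteriorAlgebra

/-- The bivector `x ∧ y` in the exterior algebra. -/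
noncomputable def wedge {n : ℕ} (x y : Fin n → ℝ) : ExteriorAlgebra ℝ (Fin n → ℝ) :=
  ι ℝ x * ι ℝ y

/-- `g` is a force applied at the projective point `[x]`: a decomposable bivector
divisible by `x`. -/
def IsForceAt {n : ℕ} (x : Fin n → ℝ) (g : ExteriorAlgebra ℝ (Fin n → ℝ)) : Prop :=
  ∃ y, g = wedge x y

/-- Equilibrium load on a projective framework: a force at each vertex, summing to zero. -/
def ProjEquilibriumLoad {V : Type*} [Fintype V] {n : ℕ} (X : V → Fin n → ℝ)
    (G : V → ExteriorAlgebra ℝ (Fin n → ℝ)) : Prop :=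
  (∀ i, IsForceAt (X i) (G i)) ∧ ∑ i, G i = 0

/-- Resolvable load on a projective framework: resolved by a stress assigning to
each edge `ij` a bivector in `Λ²span{x_i, x_j}` (i.e. a multiple `c_{ij} x_i ∧ x_j`,
with `w_{ij} = −w_{ji}` amounting to symmetry of the scalars). -/
def ProjResolvableLoad {V : Type*} [Fintype V] {n : ℕ} (Edge : V → V → Prop)
    (X : V → Fin n → ℝ) (G : V → ExteriorAlgebra ℝ (Fin n → ℝ)) : Prop :=
  ∃ c : V → V → ℝ, (∀ i j, c i j = c j i) ∧ (∀ i j, ¬ Edge i j → c i j = 0) ∧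
    ∀ i, G i = ∑ j, c i j • wedge (X i) (X j)

/-- Static rigidity of a projective framework. -/
def ProjStaticallyRigid {V : Type*} [Fintype V] {n : ℕ} (Edge : V → V → Prop)
    (X : V → Fin n → ℝ) : Prop :=
  ∀ G, ProjEquilibriumLoad X G → ProjResolvableLoad Edge X G

lemma ExteriorAlgebra.map_symm_map {R M N : Type*} [CommRing R] [AddCommGroup M] [Module R M]
    [AddCommGroup N] [Module R N] (f : M ≃ₗ[R] N) (z : ExteriorAlgebra R M) :
    map (f.symm : N →ₗ[R] M) (map (f : M →ₗ[R] N) z) = z :=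
  leftInverse_map_iff.mpr f.symm_apply_apply z

lemma ExteriorAlgebra.map_map_symm {R M N : Type*} [CommRing R] [AddCommGroup M] [Module R M]
    [AddCommGroup N] [Module R N] (f : M ≃ₗ[R] N) (z : ExteriorAlgebra R N) :
    map (f : M →ₗ[R] N) (map (f.symm : N →ₗ[R] M) z) = z :=
  leftInverse_map_iff.mpr f.apply_symm_apply z

section Wedge

variable {n : ℕ} {x : Fin n → ℝ} {g : ExteriorAlgebra ℝ (Fin n → ℝ)}

lemma wedge_smul_left (a : ℝ) (x y : Fin n → ℝ) : wedge (a • x) y = a • wedge x y := by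
  simp only [wedge, map_smul, smul_mul_assoc]

lemma wedge_smul_right (a : ℝ) (x y : Fin n → ℝ) : wedge x (a • y) = a • wedge x y := by
  simp only [wedge, map_smul, mul_smul_comm]

lemma map_wedge (f : (Fin n → ℝ) →ₗ[ℝ] (Fin n → ℝ)) (x y : Fin n → ℝ) :
    map f (wedge x y) = wedge (f x) (f y) := by
  simp only [wedge, map_mul, map_apply_ι]

lemma IsForceAt.map (h : IsForceAt x g) (f : (Fin n → ℝ) →ₗ[ℝ] (Fin n → ℝ)) :
    IsForceAt (f x) (map f g) := by
  obtain ⟨y, rfl⟩ := h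
  exact ⟨f y, map_wedge f x y⟩

lemma IsForceAt.smul (h : IsForceAt x g) {a : ℝ} (ha : a ≠ 0) : IsForceAt (a • x) g := by
  obtain ⟨y, rfl⟩ := h
  refine ⟨a⁻¹ • y, ?_⟩
  rw [wedge_smul_left, wedge_smul_right, smul_smul, mul_inv_cancel₀ ha, one_smul]

end Wedge

section Loads

variable {V : Type*} [Fintype V] {n : ℕ} {X : V → Fin n → ℝ}
  {G : V → ExteriorAlgebra ℝ (Fin n → ℝ)}

lemma ProjEquilibriumLoad.map (h : ProjEquilibriumLoad X G)
    (f : (Fin n → ℝ) →ₗ[ℝ] (Fin n → ℝ)) :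
    ProjEquilibriumLoad (fun i => f (X i)) (fun i => map f (G i)) :=
  ⟨fun i => (h.1 i).map f, by rw [← map_sum, h.2, map_zero]⟩

lemma projEquilibriumLoad_map_iff (f : (Fin n → ℝ) ≃ₗ[ℝ] (Fin n → ℝ)) :
    ProjEquilibriumLoad (fun i => f (X i))
        (fun i => map (f : (Fin n → ℝ) →ₗ[ℝ] _) (G i)) ↔ ProjEquilibriumLoad X G := by
  refine ⟨fun h => ?_, fun h => h.map f⟩
  simpa only [LinearEquiv.coe_coe, LinearEquiv.symm_apply_apply, map_symm_map] using
    h.map f.symm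

lemma ProjEquilibriumLoad.smul (h : ProjEquilibriumLoad X G) {s : V → ℝ}
    (hs : ∀ i, s i ≠ 0) : ProjEquilibriumLoad (fun i => s i • X i) G :=
  ⟨fun i => (h.1 i).smul (hs i), h.2⟩

lemma projEquilibriumLoad_smul_iff {s : V → ℝ} (hs : ∀ i, s i ≠ 0) :
    ProjEquilibriumLoad (fun i => s i • X i) G ↔ ProjEquilibriumLoad X G := by
  refine ⟨fun h => ?_, fun h => h.smul hs⟩
  simpa only [inv_smul_smul₀ (hs _)] using
    h.smul (s := fun i => (s i)⁻¹) fun i => inv_ne_zero (hs i)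

variable {Edge : V → V → Prop}

lemma ProjResolvableLoad.map (h : ProjResolvableLoad Edge X G)
    (f : (Fin n → ℝ) →ₗ[ℝ] (Fin n → ℝ)) :
    ProjResolvableLoad Edge (fun i => f (X i)) (fun i => map f (G i)) := by
  obtain ⟨c, hsymm, hedge, hres⟩ := h
  refine ⟨c, hsymm, hedge, fun i => ?_⟩
  simp only [hres i, map_sum, map_smul, map_wedge]

lemma projResolvableLoad_map_iff (f : (Fin n → ℝ) ≃ₗ[ℝ] (Fin n → ℝ)) :
    ProjResolvableLoad Edge (fun i => f (X i))
        (fun i => map (f : (Fin n → ℝ) →ₗ[ℝ] _) (G i)) ↔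
      ProjResolvableLoad Edge X G := by
  refine ⟨fun h => ?_, fun h => h.map f⟩
  simpa only [LinearEquiv.coe_coe, LinearEquiv.symm_apply_apply, map_symm_map] using
    h.map f.symm

lemma ProjResolvableLoad.smul (h : ProjResolvableLoad Edge X G) {s : V → ℝ}
    (hs : ∀ i, s i ≠ 0) : ProjResolvableLoad Edge (fun i => s i • X i) G := by
  obtain ⟨c, hsymm, hedge, hres⟩ := h
  refine ⟨fun i j => (s i)⁻¹ * (s j)⁻¹ * c i j, fun i j => by simp only [hsymm i j]; ring,
    fun i j hij => by simp only [hedge i j hij, mul_zero], fun i => ?_⟩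
  rw [hres i]
  refine Finset.sum_congr rfl fun j _ => ?_
  rw [wedge_smul_left, wedge_smul_right, smul_smul, smul_smul]
  congr 1
  field_simp [hs i, hs j]

lemma projResolvableLoad_smul_iff {s : V → ℝ} (hs : ∀ i, s i ≠ 0) :
    ProjResolvableLoad Edge (fun i => s i • X i) G ↔ ProjResolvableLoad Edge X G := by
  refine ⟨fun h => ?_, fun h => h.smul hs⟩
  simpa only [inv_smul_smul₀ (hs _)] using
    h.smul (s := fun i => (s i)⁻¹) fun i => inv_ne_zero (hs i)

lemma ProjStaticallyRigid.map (h : ProjStaticallyRigid Edge X)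
    (f : (Fin n → ℝ) ≃ₗ[ℝ] (Fin n → ℝ)) :
    ProjStaticallyRigid Edge (fun i => f (X i)) := by
  intro G hG
  have hG_eq : G = fun i => ExteriorAlgebra.map (f : (Fin n → ℝ) →ₗ[ℝ] _)
      (ExteriorAlgebra.map (f.symm : _ →ₗ[ℝ] _) (G i)) :=
    funext fun i => (map_map_symm f (G i)).symm
  rw [hG_eq] at hG ⊢
  exact (projResolvableLoad_map_iff f).mpr (h _ ((projEquilibriumLoad_map_iff f).mp hG))

lemma projStaticallyRigid_map_iff (f : (Fin n → ℝ) ≃ₗ[ℝ] (Fin n → ℝ)) :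
    ProjStaticallyRigid Edge (fun i => f (X i)) ↔ ProjStaticallyRigid Edge X := by
  refine ⟨fun h => ?_, fun h => h.map f⟩
  simpa only [LinearEquiv.symm_apply_apply] using h.map f.symm

lemma projStaticallyRigid_smul_iff {s : V → ℝ} (hs : ∀ i, s i ≠ 0) :
    ProjStaticallyRigid Edge (fun i => s i • X i) ↔ ProjStaticallyRigid Edge X :=
  forall_congr' fun _ => imp_congr (projEquilibriumLoad_smul_iff hs)
    (projResolvableLoad_smul_iff hs)

end Loads

theorem projective_invariance_static_general {V : Type*} [Fintype V] {d : ℕ}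
    (Edge : V → V → Prop)
    (M : Matrix (Fin (d+1)) (Fin (d+1)) ℝ) (hM : IsUnit M.det)
    (X : V → Fin (d+1) → ℝ)
    (hfin : ∀ i, M.mulVec (X i) 0 ≠ 0)
    (X' : V → Fin (d+1) → ℝ)
    (hX' : ∀ i, X' i = (M.mulVec (X i) 0)⁻¹ • M.mulVec (X i)) :
    (∀ G, ProjEquilibriumLoad X G ↔
      ProjEquilibriumLoad X' (fun i => ExteriorAlgebra.map (Matrix.mulVecLin M) (G i))) ∧
    (∀ G, ProjResolvableLoad Edge X G ↔
      ProjResolvableLoad Edge X' (fun i => ExteriorAlgebra.map (Matrix.mulVecLin M) (G i))) ∧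
    (ProjStaticallyRigid Edge X ↔ ProjStaticallyRigid Edge X') := by
  let f := M.toLinearEquiv' (M.invertibleOfIsUnitDet hM)
  have hs : ∀ i, (M.mulVec (X i) 0)⁻¹ ≠ 0 := fun i => inv_ne_zero (hfin i)
  obtain rfl : X' = fun i => (M.mulVec (X i) 0)⁻¹ • f (X i) := funext hX'
  exact ⟨fun _ => ((projEquilibriumLoad_smul_iff hs).trans (projEquilibriumLoad_map_iff f)).symm,
    fun _ => ((projResolvableLoad_smul_iff hs).trans (projResolvableLoad_map_iff f)).symm,
    ((projStaticallyRigid_smul_iff hs).trans (projStaticallyRigid_map_iff f)).symm⟩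

/-- projective invariance of static rigidity: if `M ∈ GL(ℝ^{d+1})`
induces a projective map sending no vertex of `P ⊂ E^d` to infinity, then
`M_* : Λ²ℝ^{d+1} → Λ²ℝ^{d+1}` carries equilibrium loads on `P` bijectively to
equilibrium loads on `Φ∘P` and resolvable loads to resolvable ones; consequently
`P` is statically rigid iff `Φ∘P` is. -/
theorem projective_invariance_static {V : Type*} [Fintype V] {d : ℕ}
    (Edge : V → V → Prop)
    (M : Matrix (Fin (d+1)) (Fin (d+1)) ℝ) (hM : IsUnit M.det)
    (P : V → Fin d → ℝ) (hP : ∀ i j, Edge i j → P i ≠ P j)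
    (X : V → Fin (d+1) → ℝ) (hX : ∀ i, X i = Fin.cons 1 (P i))
    (hfin : ∀ i, M.mulVec (X i) 0 ≠ 0)
    (X' : V → Fin (d+1) → ℝ)
    (hX' : ∀ i, X' i = (M.mulVec (X i) 0)⁻¹ • M.mulVec (X i)) :
    (∀ G, ProjEquilibriumLoad X G ↔
      ProjEquilibriumLoad X' (fun i => ExteriorAlgebra.map (Matrix.mulVecLin M) (G i))) ∧
    (∀ G, ProjResolvableLoad Edge X G ↔
      ProjResolvableLoad Edge X' (fun i => ExteriorAlgebra.map (Matrix.mulVecLin M) (G i))) ∧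
    (ProjStaticallyRigid Edge X ↔ ProjStaticallyRigid Edge X') :=
  projective_invariance_static_general Edge M hM X hfin X' hX'
end

section
/- Darboux–Sauer correspondence (kinematic form): let Φ be a projective transformation of ℝP^d mapping no vertex of the framework P to infinity, with L the hyperplane sent to infinity and dΦ_p the differential of Φ at p. Then the velocity field Q = (q_i) is an infinitesimal motion of P if and only if the velocity field (h_L(p_i)^{-2} · ((dΦ_{p_i})^{-1})^*(q_i)) is an infinitesimal motion of Φ∘P, where h_L is the signed distance to L and * denotes the adjoint with respect to the Euclidean inner product. -/
/-!
Lift a velocity `q` at `p` to the linear form `velocityLift p q = (-⟨p, q⟩, q)` on homogeneous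
coordinates: it vanishes at `(1, p)` and is `q` on `(0, v)`. In terms of lifts the edge condition
reads `⟨p - p', q - q'⟩ = -(ω (1, p') + ω' (1, p))`. Once `dΦ` is written out, the defining
identity of `Q'` forces `Mᵀ ω'ᵢ = h(pᵢ)⁻¹ ωᵢ`; since `M (1, p) = h(p) (1, Φ p)`, each
edge condition of `(Φ ∘ P, Q')` is that of `(P, Q)` multiplied by `(h(pᵢ) h(pⱼ))⁻¹ ≠ 0`.
-/

open Matrix

section VelocityLift

variable {R : Type*} [CommRing R] {n : ℕ}

theorem finCons_dotProduct (a : R) (x : Fin n → R) (y : Fin (n + 1) → R) :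
    (Fin.cons a x : Fin (n + 1) → R) ⬝ᵥ y = a * y 0 + x ⬝ᵥ Fin.tail y :=
  cons_dotProduct a x y

theorem dotProduct_finCons (y : Fin (n + 1) → R) (a : R) (x : Fin n → R) :
    y ⬝ᵥ (Fin.cons a x : Fin (n + 1) → R) = y 0 * a + Fin.tail y ⬝ᵥ x :=
  dotProduct_cons y a x

def velocityLift (p q : Fin n → R) : Fin (n + 1) → R :=
  Fin.cons (-(p ⬝ᵥ q)) q

theorem velocityLift_dotProduct (p q : Fin n → R) (y : Fin (n + 1) → R) :
    velocityLift p q ⬝ᵥ y = q ⬝ᵥ Fin.tail y - y 0 * (p ⬝ᵥ q) := by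
  rw [velocityLift, finCons_dotProduct]
  ring

theorem velocityLift_dotProduct_cons_one (p q x : Fin n → R) :
    velocityLift p q ⬝ᵥ Fin.cons 1 x = q ⬝ᵥ (x - p) := by
  rw [velocityLift_dotProduct, Fin.tail_cons, Fin.cons_zero, one_mul, dotProduct_sub,
    dotProduct_comm p]

theorem velocityLift_smul (p q : Fin n → R) (c : R) :
    velocityLift p (c • q) = c • velocityLift p q := by
  refine funext fun α => Fin.cases ?_ (fun _ => ?_) α <;> simp [velocityLift]

theorem eq_velocityLift_tail {z : Fin (n + 1) → R} {x : Fin n → R}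
    (hz : z ⬝ᵥ Fin.cons 1 x = 0) : z = velocityLift x (Fin.tail z) := by
  rw [dotProduct_finCons] at hz
  refine funext fun α => Fin.cases ?_ (fun _ => ?_) α
  · rw [velocityLift, Fin.cons_zero, dotProduct_comm]
    linear_combination hz
  · rfl

theorem sub_dotProduct_sub_eq_neg_velocityLift (p p' q q' : Fin n → R) :
    (p - p') ⬝ᵥ (q - q') =
      -(velocityLift p q ⬝ᵥ Fin.cons 1 p' + velocityLift p' q' ⬝ᵥ Fin.cons 1 p) := by
  simp only [velocityLift_dotProduct_cons_one, sub_dotProduct, dotProduct_sub,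
    dotProduct_comm q, dotProduct_comm q']
  ring

end VelocityLift

section ProjectiveMap

variable {K : Type*} [Field K] {n : ℕ} (M : Matrix (Fin (n + 1)) (Fin (n + 1)) K)

def projectiveDenom (x : Fin n → K) : K :=
  (M *ᵥ Fin.cons 1 x) 0

def projectiveMap (x : Fin n → K) : Fin n → K :=
  fun k => (M *ᵥ Fin.cons 1 x) k.succ / projectiveDenom M x

variable {M}

theorem mulVec_cons_one_eq_smul {x : Fin n → K} (hx : projectiveDenom M x ≠ 0) :
    M *ᵥ Fin.cons 1 x = projectiveDenom M x • Fin.cons 1 (projectiveMap M x) := by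
  refine funext fun α => Fin.cases ?_ (fun _ => ?_) α
  · simp [projectiveDenom]
  · simp [projectiveMap, mul_div_cancel₀ _ hx]

theorem dotProduct_cons_one_projectiveMap {x : Fin n → K} (hx : projectiveDenom M x ≠ 0)
    (w : Fin (n + 1) → K) :
    w ⬝ᵥ Fin.cons 1 (projectiveMap M x) =
      (projectiveDenom M x)⁻¹ * (w ᵥ* M ⬝ᵥ Fin.cons 1 x) := by
  rw [← dotProduct_mulVec, mulVec_cons_one_eq_smul hx, dotProduct_smul, smul_eq_mul,
    inv_mul_cancel_left₀ hx]

theorem sub_dotProduct_sub_projectiveMap {x y : Fin n → K} {q q' r r' : Fin n → K}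
    (hx : projectiveDenom M x ≠ 0) (hy : projectiveDenom M y ≠ 0)
    (hq : velocityLift (projectiveMap M x) q' ᵥ* M =
      (projectiveDenom M x)⁻¹ • velocityLift x q)
    (hr : velocityLift (projectiveMap M y) r' ᵥ* M =
      (projectiveDenom M y)⁻¹ • velocityLift y r) :
    (projectiveMap M x - projectiveMap M y) ⬝ᵥ (q' - r') =
      (projectiveDenom M x * projectiveDenom M y)⁻¹ * ((x - y) ⬝ᵥ (q - r)) := by
  rw [sub_dotProduct_sub_eq_neg_velocityLift, sub_dotProduct_sub_eq_neg_velocityLift,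
    dotProduct_cons_one_projectiveMap hy, dotProduct_cons_one_projectiveMap hx, hq, hr,
    smul_dotProduct, smul_dotProduct, smul_eq_mul, smul_eq_mul, mul_inv]
  ring

end ProjectiveMap

section Derivative

variable {𝕜 : Type*} [NontriviallyNormedField 𝕜] [CompleteSpace 𝕜] {n : ℕ}

theorem hasFDerivAt_mulVec_cons_one {m : Type*} [Fintype m] (M : Matrix m (Fin (n + 1)) 𝕜)
    (x : Fin n → 𝕜) :
    HasFDerivAt (fun y : Fin n → 𝕜 => M *ᵥ Fin.cons 1 y)
      (LinearMap.toContinuousLinearMap M.mulVecLin ∘L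
        (0 : (Fin n → 𝕜) →L[𝕜] 𝕜).finCons (.id 𝕜 _)) x :=
  (LinearMap.toContinuousLinearMap M.mulVecLin).hasFDerivAt.comp x
    ((hasFDerivAt_const 1 x).finCons (hasFDerivAt_id x))

variable {M : Matrix (Fin (n + 1)) (Fin (n + 1)) 𝕜} {x : Fin n → 𝕜}

theorem fderiv_projectiveMap_apply (hx : projectiveDenom M x ≠ 0) (v : Fin n → 𝕜) :
    fderiv 𝕜 (projectiveMap M) x v = (projectiveDenom M x)⁻¹ •
      (Fin.tail (M *ᵥ Fin.cons 0 v) - (M *ᵥ Fin.cons 0 v) 0 • projectiveMap M x) := by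
  rw [projectiveDenom] at hx ⊢
  have hg := hasFDerivAt_mulVec_cons_one M x
  have hinv := (hasDerivAt_inv hx).comp_hasFDerivAt x
    ((ContinuousLinearMap.proj 0).hasFDerivAt.comp x hg)
  have htail := (Pi.compRightL 𝕜 (fun _ => 𝕜) Fin.succ).hasFDerivAt.comp x hg
  have hΦ := (hinv.smul htail).congr_of_eventuallyEq (f₁ := projectiveMap M)
    (.of_forall fun y => funext fun k => by
      simp [projectiveMap, projectiveDenom, div_eq_inv_mul])
  rw [hΦ.fderiv]
  funext k
  simp only [Function.comp_apply, ContinuousLinearMap.proj_apply, _root_.add_apply,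
    _root_.smul_apply, _root_.zero_apply, ContinuousLinearMap.comp_apply,
    ContinuousLinearMap.prod_apply, ContinuousLinearMap.id_apply, ContinuousLinearEquiv.coe_coe,
    LinearMap.coe_toContinuousLinearMap', mulVecBilin_apply, ContinuousLinearMap.smulRight_apply,
    smul_eq_mul, neg_mul, neg_smul, Pi.add_apply, Pi.smul_apply, Pi.compRightL_apply,
    Pi.neg_apply, Pi.sub_apply, Fin.tail, projectiveMap, projectiveDenom]
  rw [show (Fin.consEquivL 𝕜 fun _ => 𝕜) (0, v) = Fin.cons 0 v from rfl]
  field_simp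
  ring

theorem dotProduct_fderiv_projectiveMap (hx : projectiveDenom M x ≠ 0) (q v : Fin n → 𝕜) :
    q ⬝ᵥ fderiv 𝕜 (projectiveMap M) x v =
      (projectiveDenom M x)⁻¹ * (velocityLift (projectiveMap M x) q ⬝ᵥ M *ᵥ Fin.cons 0 v) := by
  rw [fderiv_projectiveMap_apply hx, velocityLift_dotProduct, dotProduct_smul, dotProduct_sub,
    dotProduct_smul, smul_eq_mul, smul_eq_mul, dotProduct_comm q (projectiveMap M x)]

theorem vecMul_velocityLift_projectiveMap (hx : projectiveDenom M x ≠ 0) {q q' : Fin n → 𝕜}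
    (hq' : ∀ v, q' ⬝ᵥ fderiv 𝕜 (projectiveMap M) x v =
      projectiveDenom M x ^ (-2 : ℤ) * (q ⬝ᵥ v)) :
    velocityLift (projectiveMap M x) q' ᵥ* M = (projectiveDenom M x)⁻¹ • velocityLift x q := by
  set z := velocityLift (projectiveMap M x) q' ᵥ* M
  have hz : z ⬝ᵥ Fin.cons 1 x = 0 := by
    rw [← dotProduct_mulVec, mulVec_cons_one_eq_smul hx, dotProduct_smul,
      velocityLift_dotProduct_cons_one, sub_self, dotProduct_zero, smul_zero]
  have htail : Fin.tail z = (projectiveDenom M x)⁻¹ • q := by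
    refine dotProduct_eq _ _ fun v => ?_
    calc Fin.tail z ⬝ᵥ v
      _ = z ⬝ᵥ Fin.cons 0 v := by rw [dotProduct_finCons, mul_zero, zero_add]
      _ = projectiveDenom M x * (q' ⬝ᵥ fderiv 𝕜 (projectiveMap M) x v) := by
        rw [dotProduct_fderiv_projectiveMap hx, ← dotProduct_mulVec, mul_inv_cancel_left₀ hx]
      _ = (projectiveDenom M x)⁻¹ • q ⬝ᵥ v := by
        rw [hq', smul_dotProduct, smul_eq_mul]
        field_simp
  rw [eq_velocityLift_tail hz, htail, velocityLift_smul]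

end Derivative

theorem darboux_sauer_kinematic_general {V : Type*} {d : ℕ}
    (Edge : V → V → Prop)
    (M : Matrix (Fin (d+1)) (Fin (d+1)) ℝ)
    (P : V → Fin d → ℝ)
    (hfin : ∀ i, M.mulVec (Fin.cons 1 (P i)) 0 ≠ 0)
    (Φ : (Fin d → ℝ) → (Fin d → ℝ))
    (hΦ : ∀ p, Φ p = fun k : Fin d =>
      M.mulVec (Fin.cons 1 p) k.succ / M.mulVec (Fin.cons 1 p) 0)
    (Q Q' : V → Fin d → ℝ)
    (hQ' : ∀ i (v : Fin d → ℝ),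
      (∑ k, Q' i k * fderiv ℝ Φ (P i) v k) =
        (M.mulVec (Fin.cons 1 (P i)) 0) ^ (-2 : ℤ) * ∑ k, Q i k * v k) :
    (∀ i j, Edge i j → ∑ k, (P i k - P j k) * (Q i k - Q j k) = 0) ↔
    (∀ i j, Edge i j → ∑ k, (Φ (P i) k - Φ (P j) k) * (Q' i k - Q' j k) = 0) := by
  obtain rfl : Φ = projectiveMap M := funext hΦ
  have hlift i := vecMul_velocityLift_projectiveMap (hfin i) (hQ' i)
  refine forall₂_congr fun i j => imp_congr_right fun _ => ?_
  change (P i - P j) ⬝ᵥ (Q i - Q j) = 0 ↔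
    (projectiveMap M (P i) - projectiveMap M (P j)) ⬝ᵥ (Q' i - Q' j) = 0
  rw [sub_dotProduct_sub_projectiveMap (hfin i) (hfin j) (hlift i) (hlift j)]
  simp [projectiveDenom, hfin i, hfin j]

/-- Darboux–Sauer correspondence, kinematic form: let the projective
map `Φ` be induced by `M ∈ GL(ℝ^{d+1})`, mapping no vertex of `P` to infinity, with
`h_L(p) = (M(1,p))⁰` the (rescaled) signed distance to the hyperplane sent to
infinity. If `Q'` is the velocity field determined by
`⟨q'_i, dΦ_{p_i}(v)⟩ = h_L(p_i)⁻² ⟨q_i, v⟩` for all `v` (i.e.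
`q'_i = h_L(p_i)⁻² ((dΦ_{p_i})⁻¹)* q_i`), then `Q` is an infinitesimal motion of
`P` iff `Q'` is an infinitesimal motion of `Φ∘P`. -/
theorem darboux_sauer_kinematic {V : Type*} [Fintype V] {d : ℕ}
    (Edge : V → V → Prop)
    (M : Matrix (Fin (d+1)) (Fin (d+1)) ℝ) (hM : IsUnit M.det)
    (P : V → Fin d → ℝ) (hP : ∀ i j, Edge i j → P i ≠ P j)
    (hfin : ∀ i, M.mulVec (Fin.cons 1 (P i)) 0 ≠ 0)
    (Φ : (Fin d → ℝ) → (Fin d → ℝ))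
    (hΦ : ∀ p, Φ p = fun k : Fin d =>
      M.mulVec (Fin.cons 1 p) k.succ / M.mulVec (Fin.cons 1 p) 0)
    (hdiff : ∀ i, DifferentiableAt ℝ Φ (P i))
    (Q Q' : V → Fin d → ℝ)
    (hQ' : ∀ i (v : Fin d → ℝ),
      (∑ k, Q' i k * fderiv ℝ Φ (P i) v k) =
        (M.mulVec (Fin.cons 1 (P i)) 0) ^ (-2 : ℤ) * ∑ k, Q i k * v k) :
    (∀ i j, Edge i j → ∑ k, (P i k - P j k) * (Q i k - Q j k) = 0) ↔
    (∀ i j, Edge i j → ∑ k, (Φ (P i) k - Φ (P j) k) * (Q' i k - Q' j k) = 0) :=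
  darboux_sauer_kinematic_general Edge M P hfin Φ hΦ Q Q' hQ'
end

section
/- Euclidean–projective kinematic correspondence: let P be a framework in E^d ⊂ ℝ^{d+1}. Given a velocity field Q = (q_i), define τ_i ∈ (Λ²ℝ^{d+1})*/Λ²(p_i^⊥) by ⟨p_i ∧ y, τ_i⟩ = ⟨y, q_i⟩ for all y ∈ ℝ^d. Then Q is a Euclidean infinitesimal motion of P (⟨p_i − p_j, q_i − q_j⟩ = 0 for edges) if and only if ⟨p_i ∧ p_j, τ_i − τ_j⟩ = 0 for all edges ij. -/
open ExteriorAlgebra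

/-!
Write `p̂ = (1, p)` for the homogeneous lift of a point `p ∈ E^d`. Since `p̂ᵢ ∧ p̂ᵢ = 0`,
`p̂ᵢ ∧ p̂ⱼ = p̂ᵢ ∧ (p̂ⱼ - p̂ᵢ)` and `p̂ⱼ - p̂ᵢ = (0, pⱼ - pᵢ)` lies in `ℝ^d`, so the defining
property of `τᵢ` gives `⟨p̂ᵢ ∧ p̂ⱼ, τᵢ⟩ = ⟨pⱼ - pᵢ, qᵢ⟩`. By antisymmetry likewise
`⟨p̂ᵢ ∧ p̂ⱼ, τⱼ⟩ = -⟨pᵢ - pⱼ, qⱼ⟩`, hence `⟨p̂ᵢ ∧ p̂ⱼ, τᵢ - τⱼ⟩ = -⟨pᵢ - pⱼ, qᵢ - qⱼ⟩`.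
-/

theorem ExteriorAlgebra.ι_mul_ι_sub_self {R M : Type*} [CommRing R] [AddCommGroup M]
    [Module R M] (x y : M) : ι R x * ι R (y - x) = ι R x * ι R y := by
  rw [map_sub, mul_sub, ι_sq_zero, sub_zero]

theorem ExteriorAlgebra.ι_mul_ι_swap {R M : Type*} [CommRing R] [AddCommGroup M]
    [Module R M] (x y : M) : ι R x * ι R y = -(ι R y * ι R x) :=
  eq_neg_of_add_eq_zero_left (ι_add_mul_swap x y)

section ProjectiveVelocity

variable {R : Type*} [CommRing R] {d : ℕ}

theorem apply_ι_cons_one_mul_ι_cons_one {τ : ExteriorAlgebra R (Fin (d+1) → R) →ₗ[R] R}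
    {a q : Fin d → R}
    (hτ : ∀ y : Fin (d+1) → R, y 0 = 0 →
      τ (ι R (Fin.cons 1 a : Fin (d+1) → R) * ι R y) = ∑ k, y k.succ * q k)
    (b : Fin d → R) :
    τ (ι R (Fin.cons 1 a : Fin (d+1) → R) * ι R (Fin.cons 1 b : Fin (d+1) → R)) =
      ∑ k, (b k - a k) * q k := by
  rw [← ι_mul_ι_sub_self, hτ _ (by simp)]
  simp

theorem sub_apply_ι_cons_one_mul_ι_cons_one
    {τ σ : ExteriorAlgebra R (Fin (d+1) → R) →ₗ[R] R} {a b q r : Fin d → R}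
    (hτ : ∀ y : Fin (d+1) → R, y 0 = 0 →
      τ (ι R (Fin.cons 1 a : Fin (d+1) → R) * ι R y) = ∑ k, y k.succ * q k)
    (hσ : ∀ y : Fin (d+1) → R, y 0 = 0 →
      σ (ι R (Fin.cons 1 b : Fin (d+1) → R) * ι R y) = ∑ k, y k.succ * r k) :
    (τ - σ) (ι R (Fin.cons 1 a : Fin (d+1) → R) * ι R (Fin.cons 1 b : Fin (d+1) → R)) =
      -∑ k, (a k - b k) * (q k - r k) := by
  rw [LinearMap.sub_apply, apply_ι_cons_one_mul_ι_cons_one hτ, ι_mul_ι_swap, map_neg,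
    apply_ι_cons_one_mul_ι_cons_one hσ, sub_neg_eq_add, ← Finset.sum_add_distrib,
    ← Finset.sum_neg_distrib]
  refine Finset.sum_congr rfl fun k _ => ?_
  ring

end ProjectiveVelocity

theorem euclidean_projective_kinematic_general {V : Type*} {d : ℕ}
    (Edge : V → V → Prop)
    (P : V → Fin d → ℝ)
    (Q : V → Fin d → ℝ)
    (τ : V → (ExteriorAlgebra ℝ (Fin (d+1) → ℝ) →ₗ[ℝ] ℝ))
    (hτ : ∀ i (y : Fin (d+1) → ℝ), y 0 = 0 →
      τ i (ι ℝ (Fin.cons 1 (P i) : Fin (d+1) → ℝ) * ι ℝ y) = ∑ k, y k.succ * Q i k) :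
    (∀ i j, Edge i j → ∑ k, (P i k - P j k) * (Q i k - Q j k) = 0) ↔
    (∀ i j, Edge i j →
      (τ i - τ j) (ι ℝ (Fin.cons 1 (P i) : Fin (d+1) → ℝ) *
                   ι ℝ (Fin.cons 1 (P j) : Fin (d+1) → ℝ)) = 0) := by
  simp only [sub_apply_ι_cons_one_mul_ι_cons_one (hτ _) (hτ _), neg_eq_zero]

/-- Euclidean–projective kinematic correspondence: let `P` be a
framework in `E^d ⊂ ℝ^{d+1}` and `Q` a velocity field. Choose for each vertex a
functional `τ_i` on `Λ²ℝ^{d+1}` (a representative of the projective velocity in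
`(Λ²ℝ^{d+1})*/Λ²(p_i^⊥)`) with `⟨p_i ∧ y, τ_i⟩ = ⟨y, q_i⟩` for all `y ∈ ℝ^d`.
Then `Q` is a Euclidean infinitesimal motion iff
`⟨p_i ∧ p_j, τ_i − τ_j⟩ = 0` for all edges. -/
theorem euclidean_projective_kinematic {V : Type*} [Fintype V] {d : ℕ}
    (Edge : V → V → Prop)
    (P : V → Fin d → ℝ) (hP : ∀ i j, Edge i j → P i ≠ P j)
    (Q : V → Fin d → ℝ)
    (τ : V → (ExteriorAlgebra ℝ (Fin (d+1) → ℝ) →ₗ[ℝ] ℝ))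
    (hτ : ∀ i (y : Fin (d+1) → ℝ), y 0 = 0 →
      τ i (ι ℝ (Fin.cons 1 (P i) : Fin (d+1) → ℝ) * ι ℝ y) = ∑ k, y k.succ * Q i k) :
    (∀ i j, Edge i j → ∑ k, (P i k - P j k) * (Q i k - Q j k) = 0) ↔
    (∀ i j, Edge i j →
      (τ i - τ j) (ι ℝ (Fin.cons 1 (P i) : Fin (d+1) → ℝ) *
                   ι ℝ (Fin.cons 1 (P j) : Fin (d+1) → ℝ)) = 0) :=
  euclidean_projective_kinematic_general Edge P Q τ hτ
end

section
/- Infinitesimal Pogorelov map to the sphere: let P be a framework in E^d ⊂ ℝ^{d+1} (hyperplane x⁰=1) and P^S = (p_i/‖p_i‖) its central projection to S^d. A velocity field Q = (q_i) is an infinitesimal motion of P if and only if the velocity field Q^S defined by q_i^S = the component tangent to S^d at p_i^S of the appropriately rescaled vector satisfying q_i = pr(‖p_i‖ · q_i^S) (where pr drops the 0-th coordinate and q_i^S ⊥ p_i^S in the Euclidean metric) is an infinitesimal motion of P^S; moreover Q is trivial iff Q^S is trivial. -/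
/-!
Write `p̂ = (1, p)` and `n(p) = ‖p̂‖`, so `p^S = p̂ / n(p)`. Tangency together with
`q = pr(n(p) · q^S)` forces `q^S = q̂ / n(p)` with `q̂ = (-⟨p, q⟩, q)`, and
`⟨p̂, q̂'⟩ = ⟨p - p', q'⟩`. Expanding, the spherical edge condition is the Euclidean one
multiplied by `1 / (n(pᵢ) n(pⱼ)) ≠ 0`. For trivial motions, `q = S p + c` lifts to the
skew matrix `[[0, -cᵀ], [c, S]]`, which maps `p̂` to `q̂` since `⟨p, S p⟩ = 0`; conversely the
lower-right block and first column of a skew `A` give back `S` and `c`.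
-/

open Matrix

/-- Central projection of a point of `E^d = {x⁰ = 1} ⊂ ℝ^{d+1}` to the unit
sphere `S^d`. -/
noncomputable def sphProj {d : ℕ} (p : Fin d → ℝ) : Fin (d+1) → ℝ :=
  (Real.sqrt (1 + ∑ l, p l ^ 2))⁻¹ • (Fin.cons 1 p : Fin (d+1) → ℝ)

def toHyperplane {d : ℕ} (p : Fin d → ℝ) : Fin (d+1) → ℝ := vecCons 1 p

noncomputable def hyperplaneNorm {d : ℕ} (p : Fin d → ℝ) : ℝ := √(1 + ∑ l, p l ^ 2)

/-- The unique vector with last coordinates `q` that is orthogonal to `toHyperplane p`. -/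
def liftVelocity {d : ℕ} (p q : Fin d → ℝ) : Fin (d+1) → ℝ := vecCons (-(p ⬝ᵥ q)) q

lemma dotProduct_mulVec_self_of_transpose_eq_neg {n : Type*} [Fintype n]
    {S : Matrix n n ℝ} (hS : Sᵀ = -S) (x : n → ℝ) : x ⬝ᵥ S *ᵥ x = 0 := by
  have h : x ⬝ᵥ S *ᵥ x = -(x ⬝ᵥ S *ᵥ x) := by
    conv_lhs => rw [dotProduct_mulVec, ← mulVec_transpose, hS, neg_mulVec, neg_dotProduct,
      dotProduct_comm]
  linarith

section
variable {d : ℕ}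

lemma hyperplaneNorm_pos (p : Fin d → ℝ) : 0 < hyperplaneNorm p :=
  Real.sqrt_pos.2 (by positivity)

lemma sphProj_eq_smul (p : Fin d → ℝ) : sphProj p = (hyperplaneNorm p)⁻¹ • toHyperplane p := rfl

lemma toHyperplane_dotProduct_liftVelocity (p p' q : Fin d → ℝ) :
    toHyperplane p ⬝ᵥ liftVelocity p' q = (p - p') ⬝ᵥ q := by
  rw [toHyperplane, liftVelocity, cons_dotProduct_cons, sub_dotProduct]
  ring

lemma eq_smul_liftVelocity_of_tangent {p q : Fin d → ℝ} {v : Fin (d+1) → ℝ}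
    (hv : sphProj p ⬝ᵥ v = 0) (hq : ∀ k, q k = hyperplaneNorm p * v k.succ) :
    v = (hyperplaneNorm p)⁻¹ • liftVelocity p q := by
  have hn := (hyperplaneNorm_pos p).ne'
  have htail : vecTail v = (hyperplaneNorm p)⁻¹ • q := by
    ext k
    simp [hq, vecTail, hn]
  have hhead : vecHead v = -(p ⬝ᵥ vecTail v) := by
    rw [sphProj_eq_smul, smul_dotProduct, toHyperplane, cons_dotProduct, smul_eq_mul,
      mul_eq_zero, or_iff_right (inv_ne_zero hn)] at hv
    linarith
  rw [← cons_head_tail v, hhead, htail, liftVelocity, smul_cons, dotProduct_smul]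
  simp

lemma sphProj_sub_dotProduct_sub (p p' q q' : Fin d → ℝ) :
    (sphProj p - sphProj p') ⬝ᵥ
        ((hyperplaneNorm p)⁻¹ • liftVelocity p q - (hyperplaneNorm p')⁻¹ • liftVelocity p' q') =
      (hyperplaneNorm p)⁻¹ * (hyperplaneNorm p')⁻¹ * ((p - p') ⬝ᵥ (q - q')) := by
  simp only [sphProj_eq_smul, sub_dotProduct, dotProduct_sub, smul_dotProduct, dotProduct_smul,
    toHyperplane_dotProduct_liftVelocity, sub_self, zero_dotProduct, smul_eq_mul]
  ring

def skewExtend (S : Matrix (Fin d) (Fin d) ℝ) (c : Fin d → ℝ) :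
    Matrix (Fin (d+1)) (Fin (d+1)) ℝ :=
  of (vecCons (vecCons 0 (-c)) fun k => vecCons (c k) (S k))

lemma skewExtend_transpose {S : Matrix (Fin d) (Fin d) ℝ} (hS : Sᵀ = -S) (c : Fin d → ℝ) :
    (skewExtend S c)ᵀ = -skewExtend S c := by
  ext k l
  refine Fin.cases ?_ (fun k => ?_) k <;> refine Fin.cases ?_ (fun l => ?_) l
  all_goals simp only [skewExtend, transpose_apply, of_apply, cons_val_zero, cons_val_succ,
    Matrix.neg_apply, Pi.neg_apply, neg_zero, neg_neg]
  exact congrFun (congrFun hS k) l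

lemma skewExtend_mulVec_toHyperplane {S : Matrix (Fin d) (Fin d) ℝ} (hS : Sᵀ = -S)
    (c p : Fin d → ℝ) :
    skewExtend S c *ᵥ toHyperplane p = liftVelocity p (S *ᵥ p + c) := by
  rw [skewExtend, cons_mulVec, liftVelocity, toHyperplane]
  congr 1
  · rw [cons_dotProduct_cons, dotProduct_add, dotProduct_mulVec_self_of_transpose_eq_neg hS,
      dotProduct_comm p c, neg_dotProduct]
    ring
  · ext k
    change vecCons (c k) (S k) ⬝ᵥ vecCons 1 p = (S *ᵥ p + c) k
    rw [cons_dotProduct_cons, Pi.add_apply, mulVec]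
    ring

lemma hyperplaneNorm_mul_mulVec_sphProj_succ (A : Matrix (Fin (d+1)) (Fin (d+1)) ℝ)
    (p : Fin d → ℝ) (k : Fin d) :
    hyperplaneNorm p * (A *ᵥ sphProj p) k.succ =
      (A.submatrix Fin.succ Fin.succ *ᵥ p + fun l : Fin d => A l.succ 0) k := by
  rw [sphProj_eq_smul, mulVec_smul, Pi.smul_apply, smul_eq_mul, ← mul_assoc,
    mul_inv_cancel₀ (hyperplaneNorm_pos p).ne', one_mul]
  simp only [mulVec, dotProduct, toHyperplane, Fin.sum_univ_succ, cons_val_zero, cons_val_succ,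
    mul_one, Pi.add_apply, submatrix_apply]
  ring

end

theorem infinitesimal_pogorelov_sphere_general {V : Type*} {d : ℕ}
    (Edge : V → V → Prop)
    (P : V → Fin d → ℝ)
    (Q : V → Fin d → ℝ) (QS : V → Fin (d+1) → ℝ)
    (htan : ∀ i, ∑ k, sphProj (P i) k * QS i k = 0)
    (hrel : ∀ i k, Q i k = Real.sqrt (1 + ∑ l, P i l ^ 2) * QS i k.succ) :
    ((∀ i j, Edge i j → ∑ k, (P i k - P j k) * (Q i k - Q j k) = 0) ↔
      (∀ i j, Edge i j →
        ∑ k, (sphProj (P i) k - sphProj (P j) k) * (QS i k - QS j k) = 0)) ∧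
    ((∃ (S : Matrix (Fin d) (Fin d) ℝ) (c : Fin d → ℝ),
        Sᵀ = -S ∧ ∀ i, Q i = S.mulVec (P i) + c) ↔
      (∃ A : Matrix (Fin (d+1)) (Fin (d+1)) ℝ,
        Aᵀ = -A ∧ ∀ i, QS i = A.mulVec (sphProj (P i)))) := by
  have hQS : ∀ i, QS i = (hyperplaneNorm (P i))⁻¹ • liftVelocity (P i) (Q i) :=
    fun i => eq_smul_liftVelocity_of_tangent (htan i) (hrel i)
  refine ⟨forall₂_congr fun i j => imp_congr_right fun _ => ?_, ?_, ?_⟩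
  · change (P i - P j) ⬝ᵥ (Q i - Q j) = 0 ↔
      (sphProj (P i) - sphProj (P j)) ⬝ᵥ (QS i - QS j) = 0
    have hscale : (hyperplaneNorm (P i))⁻¹ * (hyperplaneNorm (P j))⁻¹ ≠ 0 :=
      mul_ne_zero (inv_ne_zero (hyperplaneNorm_pos _).ne') (inv_ne_zero (hyperplaneNorm_pos _).ne')
    rw [hQS, hQS, sphProj_sub_dotProduct_sub, mul_eq_zero, or_iff_right hscale]
  · rintro ⟨S, c, hS, hQ⟩
    refine ⟨skewExtend S c, skewExtend_transpose hS c, fun i => ?_⟩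
    rw [hQS, hQ, sphProj_eq_smul, mulVec_smul, skewExtend_mulVec_toHyperplane hS]
  · rintro ⟨A, hA, hQA⟩
    refine ⟨A.submatrix Fin.succ Fin.succ, fun k => A k.succ 0,
      by rw [transpose_submatrix, hA]; rfl, fun i => funext fun k => ?_⟩
    rw [hrel, hQA]
    exact hyperplaneNorm_mul_mulVec_sphProj_succ A (P i) k

/-- infinitesimal Pogorelov map to the sphere: let `P^S` be the
central projection of the Euclidean framework `P` to `S^d`, and let `Q^S` be the
spherical velocity field (tangent to `S^d`) related to `Q` by
`q_i = pr(‖p̂_i‖ · q_i^S)` where `p̂_i = (1, p_i)` and `‖p̂_i‖ = √(1 + ‖p_i‖²)`.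
Then `Q` is an infinitesimal motion of `P` iff `Q^S` is an infinitesimal motion of
`P^S`, and `Q` is trivial iff `Q^S` is trivial. -/
theorem infinitesimal_pogorelov_sphere {V : Type*} [Fintype V] {d : ℕ}
    (Edge : V → V → Prop)
    (P : V → Fin d → ℝ) (hP : ∀ i j, Edge i j → P i ≠ P j)
    (Q : V → Fin d → ℝ) (QS : V → Fin (d+1) → ℝ)
    (htan : ∀ i, ∑ k, sphProj (P i) k * QS i k = 0)
    (hrel : ∀ i k, Q i k = Real.sqrt (1 + ∑ l, P i l ^ 2) * QS i k.succ) :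
    ((∀ i j, Edge i j → ∑ k, (P i k - P j k) * (Q i k - Q j k) = 0) ↔
      (∀ i j, Edge i j →
        ∑ k, (sphProj (P i) k - sphProj (P j) k) * (QS i k - QS j k) = 0)) ∧
    ((∃ (S : Matrix (Fin d) (Fin d) ℝ) (c : Fin d → ℝ),
        Sᵀ = -S ∧ ∀ i, Q i = S.mulVec (P i) + c) ↔
      (∃ A : Matrix (Fin (d+1)) (Fin (d+1)) ℝ,
        Aᵀ = -A ∧ ∀ i, QS i = A.mulVec (sphProj (P i)))) :=
  infinitesimal_pogorelov_sphere_general Edge P Q QS htan hrel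
end

section
/- Blaschke's bipartite flexibility theorem (spherical case): let P be a framework in E^d with bipartite graph (every edge joins a black vertex to a white vertex) whose vertices all lie on the unit sphere centered at the origin. Then the velocity field assigning q_i = p_i to every white vertex and q_i = −p_i to every black vertex is an infinitesimal motion of P. In particular, if this field is not a trivial motion, P is infinitesimally flexible. -/
open Matrix

/-! For unit vectors `p`, `q` we have `⟨p - q, p + q⟩ = ‖p‖² - ‖q‖² = 0`. Across an edge the
field `p ↦ ±p` has difference `±(p_i + p_j)`, because the two endpoints carry opposite
signs, so the edge condition is exactly this orthogonality. -/

section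

variable {R ι : Type*} [CommRing R] [Fintype ι]

theorem Finset.sum_sub_mul_add_eq_sum_sq_sub_sum_sq (x y : ι → R) :
    ∑ k, (x k - y k) * (x k + y k) = ∑ k, x k ^ 2 - ∑ k, y k ^ 2 := by
  rw [← Finset.sum_sub_distrib]
  exact Finset.sum_congr rfl fun k _ => by ring

theorem sum_sub_mul_signed_sub_eq_zero {b c : Bool} (hbc : b ≠ c) (x y : ι → R)
    (hxy : ∑ k, x k ^ 2 = ∑ k, y k ^ 2) :
    ∑ k, (x k - y k) * ((if b then x else -x) k - (if c then y else -y) k) = 0 := by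
  have hzero : ∑ k, (x k - y k) * (x k + y k) = 0 := by
    rw [Finset.sum_sub_mul_add_eq_sum_sq_sub_sum_sq, hxy, sub_self]
  cases b <;> cases c <;> simp only [ne_eq, not_true_eq_false] at hbc
  · simp only [Bool.false_eq_true, if_false, if_true, Pi.neg_apply]
    rw [← neg_eq_zero, ← hzero, ← Finset.sum_neg_distrib]
    exact Finset.sum_congr rfl fun k _ => by ring
  · simp only [Bool.false_eq_true, if_false, if_true, Pi.neg_apply, sub_neg_eq_add]
    exact hzero

end

theorem blaschke_bipartite_flexible_general {V : Type*} {d : ℕ}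
    (Edge : V → V → Prop) (color : V → Bool)
    (P : V → Fin d → ℝ)
    (hbip : ∀ i j, Edge i j → color i ≠ color j)
    (hsph : ∀ i, ∑ k, P i k ^ 2 = 1)
    (Q : V → Fin d → ℝ)
    (hQ : ∀ i, Q i = if color i then P i else -P i) :
    (∀ i j, Edge i j → ∑ k, (P i k - P j k) * (Q i k - Q j k) = 0) ∧
    (¬ (∃ (S : Matrix (Fin d) (Fin d) ℝ) (c : Fin d → ℝ),
        Sᵀ = -S ∧ ∀ i, Q i = S.mulVec (P i) + c) →
      ∃ Q' : V → Fin d → ℝ,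
        (∀ i j, Edge i j → ∑ k, (P i k - P j k) * (Q' i k - Q' j k) = 0) ∧
        ¬ (∃ (S : Matrix (Fin d) (Fin d) ℝ) (c : Fin d → ℝ),
            Sᵀ = -S ∧ ∀ i, Q' i = S.mulVec (P i) + c)) := by
  have motion : ∀ i j, Edge i j → ∑ k, (P i k - P j k) * (Q i k - Q j k) = 0 := by
    intro i j hij
    rw [hQ i, hQ j]
    exact sum_sub_mul_signed_sub_eq_zero (hbip i j hij) (P i) (P j) ((hsph i).trans (hsph j).symm)
  exact ⟨motion, fun nontrivial => ⟨Q, motion, nontrivial⟩⟩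

/-- Blaschke's bipartite flexibility, spherical case: for a
bipartite framework all of whose vertices lie on the unit sphere, the velocity
field `q_i = p_i` on white vertices and `q_i = −p_i` on black vertices is an
infinitesimal motion; in particular if this field is not trivial, the framework is
infinitesimally flexible. -/
theorem blaschke_bipartite_flexible {V : Type*} [Fintype V] {d : ℕ}
    (Edge : V → V → Prop) (color : V → Bool)
    (P : V → Fin d → ℝ) (hP : ∀ i j, Edge i j → P i ≠ P j)
    (hbip : ∀ i j, Edge i j → color i ≠ color j)
    (hsph : ∀ i, ∑ k, P i k ^ 2 = 1)
    (Q : V → Fin d → ℝ)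
    (hQ : ∀ i, Q i = if color i then P i else -P i) :
    (∀ i j, Edge i j → ∑ k, (P i k - P j k) * (Q i k - Q j k) = 0) ∧
    (¬ (∃ (S : Matrix (Fin d) (Fin d) ℝ) (c : Fin d → ℝ),
        Sᵀ = -S ∧ ∀ i, Q i = S.mulVec (P i) + c) →
      ∃ Q' : V → Fin d → ℝ,
        (∀ i j, Edge i j → ∑ k, (P i k - P j k) * (Q' i k - Q' j k) = 0) ∧
        ¬ (∃ (S : Matrix (Fin d) (Fin d) ℝ) (c : Fin d → ℝ),
            Sᵀ = -S ∧ ∀ i, Q' i = S.mulVec (P i) + c)) :=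
  blaschke_bipartite_flexible_general Edge color P hbip hsph Q hQ
end
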